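/- Let Ω⊂ℝ^n be a bounded domain with a C^∞(Ω̄) defining function ρ such that (1−|∇ρ|²)/ρ extends to a function in C^∞(Ω̄). Let a>0, b, c, s be real constants with s>0 and a s(s−1) + b s + c = 0, and assume aμ(μ−1)+bμ+c ≠ 0 for μ = s+1, …, s+m, where m≥1 is an integer. Let L = aρ²Δ + bρ∇ρ·∇ + c. Then for every ψ_0 ∈ C^∞(Ω̄) there exist ψ_1, …, ψ_m ∈ C^∞(Ω̄) and η ∈ C^∞(Ω̄) such that L((Σ_{l=0}^m ψ_l ρ^l)ρ^s) = η ρ^{s+m+1} in Ω. -/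

import Mathlib

open Set Filter Topology

noncomputable section

abbrev En (n : ℕ) : Type := EuclideanSpace ℝ (Fin n)

variable {n : ℕ}

/-- The partial derivative `∂ᵢ w` (computed with the full-space derivative). -/
noncomputable def pd (i : Fin n) (w : En n → ℝ) (x : En n) : ℝ :=
  fderiv ℝ w x (EuclideanSpace.single i 1)

/-- Iterated partial derivatives along a list of coordinate directions. -/
noncomputable def pdAll : List (Fin n) → (En n → ℝ) → En n → ℝ
  | [], w => w
  | i :: l, w => pd i (pdAll l w)

/-- Second-order partial derivative `∂ᵢ∂ⱼ w`. -/
noncomputable def pd2 (i j : Fin n) (w : En n → ℝ) : En n → ℝ := pd i (pd j w)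

/-- The sup norm `|w|_{L^∞(E)}`. -/
noncomputable def supNorm (E : Set (En n)) (w : En n → ℝ) : ℝ :=
  sSup ((fun x => |w x|) '' E)

/-- The Hölder seminorm `[w]_{C^β(E)}`. -/
noncomputable def holderSemi (β : ℝ) (E : Set (En n)) (w : En n → ℝ) : ℝ :=
  sSup ((fun p : En n × En n => |w p.1 - w p.2| / dist p.1 p.2 ^ β) '' (E ×ˢ E))

/-- The Hölder norm `|w|_{C^β(E)} = |w|_{L^∞(E)} + [w]_{C^β(E)}`. -/
noncomputable def holderNorm (β : ℝ) (E : Set (En n)) (w : En n → ℝ) : ℝ :=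
  supNorm E w + holderSemi β E w

/-- `w` is `β`-Hölder continuous on `E`. -/
def IsHolderOn (β : ℝ) (E : Set (En n)) (w : En n → ℝ) : Prop :=
  ∃ C : ℝ, ∀ x ∈ E, ∀ y ∈ E, |w x - w y| ≤ C * dist x y ^ β

/-- `w` is bounded on `E`. -/
def BoundedOn (E : Set (En n)) (w : En n → ℝ) : Prop :=
  ∃ M : ℝ, ∀ x ∈ E, |w x| ≤ M

/-- `w ∈ C^{k,β}(Ē)`: `w` is `C^k` in the open set `Ω`, all derivatives of order `≤ k`
extend continuously to the closure, and the order-`k` derivatives are `β`-Hölder. -/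
def MemHolderBar (k : ℕ) (β : ℝ) (Ω : Set (En n)) (w : En n → ℝ) : Prop :=
  ContinuousOn w (closure Ω) ∧ ContDiffOn ℝ k w Ω ∧
  (∀ l : List (Fin n), l.length ≤ k →
    ∃ g : En n → ℝ, ContinuousOn g (closure Ω) ∧ EqOn (pdAll l w) g Ω) ∧
  (∀ l : List (Fin n), l.length = k → IsHolderOn β Ω (pdAll l w))

/-- `w ∈ C^{k,β}(Ω)`: the interior Hölder class (Hölder on compact subsets). -/
def MemHolderLoc (k : ℕ) (β : ℝ) (Ω : Set (En n)) (w : En n → ℝ) : Prop :=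
  ContDiffOn ℝ k w Ω ∧
  ∀ K : Set (En n), K ⊆ Ω → IsCompact K →
    ∀ l : List (Fin n), l.length = k → IsHolderOn β K (pdAll l w)

/-- The norm `|w|_{C^{k,β}(Ē)}`. -/
noncomputable def holderNormCk (k : ℕ) (β : ℝ) (Ω : Set (En n)) (w : En n → ℝ) : ℝ :=
  (∑ i ∈ Finset.range (k + 1), ∑ v : Fin i → Fin n, supNorm Ω (pdAll (List.ofFn v) w)) +
  ∑ v : Fin k → Fin n, holderSemi β Ω (pdAll (List.ofFn v) w)

/-- The uniformly degenerate operator `L = ρ² a_{ij}∂_{ij} + ρ b_i ∂_i + c`. -/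
noncomputable def Lop (ρ : En n → ℝ) (a : Fin n → Fin n → En n → ℝ)
    (b : Fin n → En n → ℝ) (c : En n → ℝ) (w : En n → ℝ) (x : En n) : ℝ :=
  (ρ x) ^ 2 * ∑ i, ∑ j, a i j x * pd2 i j w x
    + ρ x * ∑ i, b i x * pd i w x + c x * w x

/-- Symmetry and uniform ellipticity `λ|ξ|² ≤ a_{ij}ξ_iξ_j ≤ Λ|ξ|²` on `E`. -/
def Elliptic (E : Set (En n)) (a : Fin n → Fin n → En n → ℝ) (lam Lam : ℝ) : Prop :=
  (∀ i j, ∀ x : En n, a i j x = a j i x) ∧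
  ∀ x ∈ E, ∀ ξ : Fin n → ℝ,
    lam * (∑ i, ξ i ^ 2) ≤ (∑ i, ∑ j, a i j x * ξ i * ξ j) ∧
    (∑ i, ∑ j, a i j x * ξ i * ξ j) ≤ Lam * (∑ i, ξ i ^ 2)

/-- The characteristic polynomial `P(μ) = μ(μ-1)a_{ij}ν_iν_j + μ b_iν_i + c`,
expressed through a function `ν` recording the boundary values of `∇ρ`. -/
def Pchar (a : Fin n → Fin n → En n → ℝ) (b : Fin n → En n → ℝ) (c : En n → ℝ)
    (ν : En n → Fin n → ℝ) (μ : ℝ) (x : En n) : ℝ :=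
  μ * (μ - 1) * (∑ i, ∑ j, a i j x * ν x i * ν x j) + μ * (∑ i, b i x * ν x i) + c x

/-- `ρ` is a defining function for `Ω`, with `ν` the continuous extension of `∇ρ`
to the closure, of unit length on the boundary. -/
def DefiningFn (Ω : Set (En n)) (ρ : En n → ℝ) (ν : En n → Fin n → ℝ) : Prop :=
  (∀ x ∈ Ω, 0 < ρ x) ∧ (∀ x ∈ frontier Ω, ρ x = 0) ∧
  ContinuousOn ρ (closure Ω) ∧ ContDiffOn ℝ 1 ρ Ω ∧
  (∀ i, ContinuousOn (fun x => ν x i) (closure Ω)) ∧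
  (∀ x ∈ Ω, ∀ i, ν x i = pd i ρ x) ∧
  (∀ x ∈ frontier Ω, (∑ i, (ν x i) ^ 2) = 1)

end

open Set Filter Topology

/-- `w ∈ C^∞(Ω̄)`: smooth in `Ω` with all derivatives extending continuously to `Ω̄`. -/
def SmoothBar {n : ℕ} (Ω : Set (En n)) (w : En n → ℝ) : Prop :=
  ContDiffOn ℝ (⊤ : ℕ∞) w Ω ∧
  ∀ l : List (Fin n), ∃ g : En n → ℝ,
    ContinuousOn g (closure Ω) ∧ EqOn (pdAll l w) g Ω

/-- The operator `L = aρ²Δ + bρ∇ρ·∇ + c` (with constant coefficients `a, b, c`). -/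
noncomputable def LopEx {n : ℕ} (ρ : En n → ℝ) (a b c : ℝ) (w : En n → ℝ) (x : En n) : ℝ :=
  a * (ρ x) ^ 2 * (∑ i, pd2 i i w x)
    + b * ρ x * (∑ i, pd i ρ x * pd i w x) + c * w x

/-! The point is the identity `L(ψ ρ^t) = P(t) ψ ρ^t + ρ^{t+1} M_t ψ`, where
`P(t) = a t(t-1) + b t + c` and `M_t` is a second-order operator with coefficients in
`C^∞(Ω̄)`: since `|∇ρ|² = 1 - ρ q`, the term `a t(t-1) ψ ρ^t |∇ρ|²` of `L(ψ ρ^t)` differs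
from `a t(t-1) ψ ρ^t` by a multiple of `ρ^{t+1}`. Since `P(s) = 0` and `P(s+l) ≠ 0` for `1 ≤ l ≤ m`,
the recursion `P(s+l+1) ψ_{l+1} = -M_{s+l} ψ_l` makes the sum `L(Σ ψ_l ρ^{s+l})`
telescope to `ρ^{s+m+1} M_{s+m} ψ_m`. -/

section PartialDerivatives

variable {n : ℕ} {U : Set (En n)} {f g : En n → ℝ} {x : En n}

theorem pd_congr_of_eqOn (hU : IsOpen U) (h : EqOn f g U) (hx : x ∈ U) (i : Fin n) :
    pd i f x = pd i g x := by
  unfold pd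
  rw [(eventuallyEq_of_mem (hU.mem_nhds hx) h).fderiv_eq]

theorem pdAll_congr_of_eqOn (hU : IsOpen U) (h : EqOn f g U) (l : List (Fin n)) :
    EqOn (pdAll l f) (pdAll l g) U := by
  induction l with
  | nil => exact h
  | cons i l ih => exact fun x hx => pd_congr_of_eqOn hU ih hx i

theorem pdAll_append_singleton (l : List (Fin n)) (i : Fin n) (w : En n → ℝ) :
    pdAll (l ++ [i]) w = pdAll l (pd i w) := by
  induction l with
  | nil => rfl
  | cons j l ih => exact congrArg (pd j) ih

theorem pd_add (hf : DifferentiableAt ℝ f x) (hg : DifferentiableAt ℝ g x) (i : Fin n) :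
    pd i (fun y => f y + g y) x = pd i f x + pd i g x := by
  simp [pd, fderiv_fun_add hf hg]

theorem pd_mul (hf : DifferentiableAt ℝ f x) (hg : DifferentiableAt ℝ g x) (i : Fin n) :
    pd i (fun y => f y * g y) x = f x * pd i g x + g x * pd i f x := by
  simp [pd, fderiv_fun_mul hf hg]

theorem pd_const_mul (hf : DifferentiableAt ℝ f x) (c : ℝ) (i : Fin n) :
    pd i (fun y => c * f y) x = c * pd i f x := by
  simp [pd, fderiv_const_mul hf]

theorem pd_sum {ι : Type*} {u : Finset ι} {A : ι → En n → ℝ}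
    (hA : ∀ j ∈ u, DifferentiableAt ℝ (A j) x) (i : Fin n) :
    pd i (fun y => ∑ j ∈ u, A j y) x = ∑ j ∈ u, pd i (A j) x := by
  simp [pd, fderiv_fun_sum hA]

theorem pd_rpow (hf : DifferentiableAt ℝ f x) (hfx : f x ≠ 0) (t : ℝ) (i : Fin n) :
    pd i (fun y => f y ^ t) x = t * f x ^ (t - 1) * pd i f x := by
  simp [pd, (hf.hasFDerivAt.rpow_const (Or.inl hfx)).fderiv, mul_assoc]

theorem contDiffOn_pd {k m : WithTop ℕ∞} (hU : IsOpen U) (hf : ContDiffOn ℝ k f U)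
    (hmk : m + 1 ≤ k) (i : Fin n) : ContDiffOn ℝ m (pd i f) U :=
  (hf.fderiv_of_isOpen hU hmk).clm_apply contDiffOn_const

theorem contDiff_pdAll (hf : ContDiff ℝ (⊤ : ℕ∞) f) (l : List (Fin n)) :
    ContDiff ℝ (⊤ : ℕ∞) (pdAll l f) := by
  induction l with
  | nil => exact hf
  | cons i l ih => exact (ih.fderiv_right le_rfl).clm_apply contDiff_const

theorem contDiffOn_pdAll (hU : IsOpen U) (hf : ContDiffOn ℝ (⊤ : ℕ∞) f U) (l : List (Fin n)) :
    ContDiffOn ℝ (⊤ : ℕ∞) (pdAll l f) U := by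
  induction l with
  | nil => exact hf
  | cons i l ih => exact contDiffOn_pd hU ih le_rfl i

theorem differentiableAt_of_contDiffOn {k : WithTop ℕ∞} (hU : IsOpen U)
    (hf : ContDiffOn ℝ k f U) (hk : k ≠ 0) (hx : x ∈ U) : DifferentiableAt ℝ f x :=
  (hf.contDiffAt (hU.mem_nhds hx)).differentiableAt hk

end PartialDerivatives

section Laplacian

variable {n : ℕ} {U : Set (En n)} {f g : En n → ℝ} {x : En n}

noncomputable def lap (w : En n → ℝ) (x : En n) : ℝ := ∑ i, pd2 i i w x

noncomputable def gradDot (f g : En n → ℝ) (x : En n) : ℝ := ∑ i, pd i f x * pd i g x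

theorem lopEx_eq (ρ : En n → ℝ) (a b c : ℝ) (w : En n → ℝ) (x : En n) :
    LopEx ρ a b c w x = a * ρ x ^ 2 * lap w x + b * ρ x * gradDot ρ w x + c * w x :=
  rfl

theorem gradDot_comm (f g : En n → ℝ) (x : En n) : gradDot f g x = gradDot g f x := by
  simp only [gradDot, mul_comm]

theorem lopEx_congr_of_eqOn (hU : IsOpen U) (ρ : En n → ℝ) (a b c : ℝ) (h : EqOn f g U)
    (hx : x ∈ U) : LopEx ρ a b c f x = LopEx ρ a b c g x := by
  have hpd2 : ∀ i, pd2 i i f x = pd2 i i g x := fun i =>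
    pd_congr_of_eqOn hU (fun y hy => pd_congr_of_eqOn hU h hy i) hx i
  simp only [LopEx, hpd2, pd_congr_of_eqOn hU h hx, h hx]

theorem lopEx_sum (hU : IsOpen U) (ρ : En n → ℝ) (a b c : ℝ) {ι : Type*} (u : Finset ι)
    {A : ι → En n → ℝ} (hA : ∀ j ∈ u, ContDiffOn ℝ 2 (A j) U) (hx : x ∈ U) :
    LopEx ρ a b c (fun y => ∑ j ∈ u, A j y) x = ∑ j ∈ u, LopEx ρ a b c (A j) x := by
  have hpd : ∀ i, EqOn (pd i fun y => ∑ j ∈ u, A j y) (fun y => ∑ j ∈ u, pd i (A j) y) U :=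
    fun i y hy => pd_sum (fun j hj => differentiableAt_of_contDiffOn hU (hA j hj) two_ne_zero hy) i
  have hpd2 : ∀ i, pd2 i i (fun y => ∑ j ∈ u, A j y) x = ∑ j ∈ u, pd2 i i (A j) x := fun i => by
    rw [pd2, pd_congr_of_eqOn hU (hpd i) hx i, pd_sum fun j hj =>
      differentiableAt_of_contDiffOn hU (contDiffOn_pd hU (hA j hj) le_rfl i) one_ne_zero hx]
    rfl
  have hlap : lap (fun y => ∑ j ∈ u, A j y) x = ∑ j ∈ u, lap (A j) x := by
    simp only [lap, hpd2]
    exact Finset.sum_comm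
  have hgrad : gradDot ρ (fun y => ∑ j ∈ u, A j y) x = ∑ j ∈ u, gradDot ρ (A j) x := by
    simp only [gradDot, hpd _ hx, Finset.mul_sum]
    exact Finset.sum_comm
  rw [lopEx_eq, hlap, hgrad]
  simp only [lopEx_eq, Finset.mul_sum, ← Finset.sum_add_distrib]

theorem gradDot_mul_right (h : En n → ℝ) (hf : DifferentiableAt ℝ f x)
    (hg : DifferentiableAt ℝ g x) :
    gradDot h (fun y => f y * g y) x = f x * gradDot h g x + g x * gradDot h f x := by
  simp only [gradDot, pd_mul hf hg, Finset.mul_sum, ← Finset.sum_add_distrib]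
  exact Finset.sum_congr rfl fun i _ => by ring

theorem gradDot_rpow_right (h : En n → ℝ) (hf : DifferentiableAt ℝ f x) (hfx : f x ≠ 0)
    (t : ℝ) : gradDot h (fun y => f y ^ t) x = t * f x ^ (t - 1) * gradDot h f x := by
  simp only [gradDot, pd_rpow hf hfx, Finset.mul_sum]
  exact Finset.sum_congr rfl fun i _ => by ring

theorem lap_mul (hU : IsOpen U) (hf : ContDiffOn ℝ 2 f U) (hg : ContDiffOn ℝ 2 g U)
    (hx : x ∈ U) :
    lap (fun y => f y * g y) x = f x * lap g x + 2 * gradDot f g x + g x * lap f x := by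
  have hd : ∀ {w : En n → ℝ}, ContDiffOn ℝ 2 w U → ∀ y ∈ U, DifferentiableAt ℝ w y :=
    fun hw y hy => differentiableAt_of_contDiffOn hU hw two_ne_zero hy
  have hd' : ∀ {w : En n → ℝ}, ContDiffOn ℝ 2 w U → ∀ i, DifferentiableAt ℝ (pd i w) x :=
    fun hw i => differentiableAt_of_contDiffOn hU (contDiffOn_pd hU hw le_rfl i) one_ne_zero hx
  have hpd2 : ∀ i, pd2 i i (fun y => f y * g y) x
      = f x * pd2 i i g x + 2 * (pd i f x * pd i g x) + g x * pd2 i i f x := fun i => by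
    rw [pd2, pd_congr_of_eqOn hU (fun y hy => pd_mul (hd hf y hy) (hd hg y hy) i) hx i,
      pd_add (f := fun y => f y * pd i g y) (g := fun y => g y * pd i f y)
        ((hd hf x hx).mul (hd' hg i)) ((hd hg x hx).mul (hd' hf i)),
      pd_mul (hd hf x hx) (hd' hg i), pd_mul (hd hg x hx) (hd' hf i), pd2, pd2]
    ring
  simp only [lap, gradDot, hpd2, Finset.mul_sum, ← Finset.sum_add_distrib]

theorem lap_rpow (hU : IsOpen U) (hf : ContDiffOn ℝ 2 f U) (hf0 : ∀ y ∈ U, f y ≠ 0)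
    (hx : x ∈ U) (t : ℝ) :
    lap (fun y => f y ^ t) x
      = t * (t - 1) * f x ^ (t - 2) * gradDot f f x + t * f x ^ (t - 1) * lap f x := by
  have hd : ∀ y ∈ U, DifferentiableAt ℝ f y :=
    fun y hy => differentiableAt_of_contDiffOn hU hf two_ne_zero hy
  have hd' : ∀ i, DifferentiableAt ℝ (pd i f) x :=
    fun i => differentiableAt_of_contDiffOn hU (contDiffOn_pd hU hf le_rfl i) one_ne_zero hx
  have hpow : DifferentiableAt ℝ (fun y => f y ^ (t - 1)) x :=
    (hd x hx).rpow_const (Or.inl (hf0 x hx))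
  have hpd2 : ∀ i, pd2 i i (fun y => f y ^ t) x
      = t * (t - 1) * f x ^ (t - 2) * (pd i f x * pd i f x) + t * f x ^ (t - 1) * pd2 i i f x :=
    fun i => by
    rw [pd2, pd_congr_of_eqOn hU (fun y hy => pd_rpow (hd y hy) (hf0 y hy) t i) hx i,
      pd_mul (hpow.const_mul t) (hd' i), pd_const_mul hpow, pd_rpow (hd x hx) (hf0 x hx),
      pd2, sub_sub, one_add_one_eq_two]
    ring
  simp only [lap, gradDot, hpd2, Finset.mul_sum, ← Finset.sum_add_distrib]

end Laplacian

section SmoothBar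

variable {n : ℕ} {Ω : Set (En n)} {f g : En n → ℝ}

theorem ContDiff.smoothBar (hf : ContDiff ℝ (⊤ : ℕ∞) f) : SmoothBar Ω f :=
  ⟨hf.contDiffOn, fun l => ⟨pdAll l f, (contDiff_pdAll hf l).continuous.continuousOn, eqOn_refl _ _⟩⟩

theorem smoothBar_const (c : ℝ) : SmoothBar Ω (fun _ => c) :=
  contDiff_const.smoothBar

variable (hΩ : IsOpen Ω)
include hΩ

theorem smoothBar_pd (hf : SmoothBar Ω f) (i : Fin n) : SmoothBar Ω (pd i f) := by
  refine ⟨contDiffOn_pd hΩ hf.1 le_rfl i, fun l => ?_⟩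
  simpa only [pdAll_append_singleton] using hf.2 (l ++ [i])

theorem pdAll_add_eqOn (hf : ContDiffOn ℝ (⊤ : ℕ∞) f Ω) (hg : ContDiffOn ℝ (⊤ : ℕ∞) g Ω)
    (l : List (Fin n)) :
    EqOn (pdAll l (fun y => f y + g y)) (fun y => pdAll l f y + pdAll l g y) Ω := by
  induction l with
  | nil => exact fun _ _ => rfl
  | cons i l ih =>
    intro x hx
    have hd : ∀ {w : En n → ℝ}, ContDiffOn ℝ (⊤ : ℕ∞) w Ω → DifferentiableAt ℝ (pdAll l w) x :=
      fun hw => differentiableAt_of_contDiffOn hΩ (contDiffOn_pdAll hΩ hw l) (by simp) hx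
    exact (pd_congr_of_eqOn hΩ ih hx i).trans (pd_add (hd hf) (hd hg) i)

theorem smoothBar_add (hf : SmoothBar Ω f) (hg : SmoothBar Ω g) :
    SmoothBar Ω (fun y => f y + g y) := by
  refine ⟨hf.1.add hg.1, fun l => ?_⟩
  obtain ⟨F, hF, hfF⟩ := hf.2 l
  obtain ⟨G, hG, hgG⟩ := hg.2 l
  refine ⟨fun y => F y + G y, hF.add hG, fun x hx => ?_⟩
  rw [pdAll_add_eqOn hΩ hf.1 hg.1 l hx]
  exact congrArg₂ (· + ·) (hfF hx) (hgG hx)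

theorem smoothBar_mul (hf : SmoothBar Ω f) (hg : SmoothBar Ω g) :
    SmoothBar Ω (fun y => f y * g y) := by
  refine ⟨hf.1.mul hg.1, fun l => ?_⟩
  -- `pdAll (l ++ [i])` differentiates along `i` first, so the Leibniz rule is applied there.
  induction l using List.reverseRecOn generalizing f g with
  | nil =>
    obtain ⟨F, hF, hfF⟩ := hf.2 []
    obtain ⟨G, hG, hgG⟩ := hg.2 []
    exact ⟨fun y => F y * G y, hF.mul hG, fun x hx => congrArg₂ (· * ·) (hfF hx) (hgG hx)⟩
  | append_singleton l i ih =>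
    obtain ⟨F, hF, hfF⟩ := ih (smoothBar_pd hΩ hf i) hg
    obtain ⟨G, hG, hgG⟩ := ih hf (smoothBar_pd hΩ hg i)
    refine ⟨fun y => F y + G y, hF.add hG, fun x hx => ?_⟩
    have hleibniz : EqOn (pd i (fun y => f y * g y)) (fun y => pd i f y * g y + f y * pd i g y) Ω :=
      fun y hy => by
        rw [pd_mul (differentiableAt_of_contDiffOn hΩ hf.1 (by simp) hy)
          (differentiableAt_of_contDiffOn hΩ hg.1 (by simp) hy)]
        ring
    rw [pdAll_append_singleton, pdAll_congr_of_eqOn hΩ hleibniz l hx,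
      pdAll_add_eqOn hΩ ((contDiffOn_pd hΩ hf.1 le_rfl i).mul hg.1)
        (hf.1.mul (contDiffOn_pd hΩ hg.1 le_rfl i)) l hx]
    exact congrArg₂ (· + ·) (hfF hx) (hgG hx)

theorem smoothBar_sub (hf : SmoothBar Ω f) (hg : SmoothBar Ω g) :
    SmoothBar Ω (fun y => f y - g y) := by
  have h := smoothBar_add hΩ hf (smoothBar_mul hΩ (smoothBar_const (-1)) hg)
  simp only [neg_one_mul, ← sub_eq_add_neg] at h
  exact h

theorem smoothBar_sum {ι : Type*} (u : Finset ι) {A : ι → En n → ℝ}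
    (hA : ∀ j ∈ u, SmoothBar Ω (A j)) : SmoothBar Ω (fun y => ∑ j ∈ u, A j y) := by
  classical
  induction u using Finset.induction_on with
  | empty => simpa using smoothBar_const (Ω := Ω) 0
  | insert j u hj ih =>
    simp only [Finset.sum_insert hj]
    exact smoothBar_add hΩ (hA j (Finset.mem_insert_self j u))
      (ih fun k hk => hA k (Finset.mem_insert_of_mem hk))

theorem smoothBar_lap (hf : SmoothBar Ω f) : SmoothBar Ω (lap f) :=
  smoothBar_sum hΩ _ fun i _ => smoothBar_pd hΩ (smoothBar_pd hΩ hf i) i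

theorem smoothBar_gradDot (hf : SmoothBar Ω f) (hg : SmoothBar Ω g) :
    SmoothBar Ω (gradDot f g) :=
  smoothBar_sum hΩ _ fun i _ => smoothBar_mul hΩ (smoothBar_pd hΩ hf i) (smoothBar_pd hΩ hg i)

end SmoothBar

section Expansion

variable {n : ℕ} {U : Set (En n)}

def charPoly (a b c t : ℝ) : ℝ := a * t * (t - 1) + b * t + c

noncomputable def remainderOp (ρ q : En n → ℝ) (a b t : ℝ) (ψ : En n → ℝ) (x : En n) : ℝ :=
  a * ρ x * lap ψ x + (2 * a * t + b) * gradDot ρ ψ x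
    + (a * t * lap ρ x - (a * t * (t - 1) + b * t) * q x) * ψ x

theorem lopEx_mul_rpow (hU : IsOpen U) {ρ q ψ : En n → ℝ} (hρ : ContDiffOn ℝ 2 ρ U)
    (hρ0 : ∀ y ∈ U, ρ y ≠ 0) (hψ : ContDiffOn ℝ 2 ψ U) (a b c t : ℝ) {x : En n} (hx : x ∈ U)
    (hq : 1 - ∑ i, pd i ρ x ^ 2 = ρ x * q x) :
    LopEx ρ a b c (fun y => ψ y * ρ y ^ t) x
      = charPoly a b c t * (ψ x * ρ x ^ t) + ρ x ^ (t + 1) * remainderOp ρ q a b t ψ x := by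
  have hρx := hρ0 x hx
  have hd : ∀ {w : En n → ℝ}, ContDiffOn ℝ 2 w U → DifferentiableAt ℝ w x :=
    fun hw => differentiableAt_of_contDiffOn hU hw two_ne_zero hx
  have hgrad : gradDot ρ ρ x = 1 - ρ x * q x := by
    rw [← hq]
    simp only [gradDot, sq, sub_sub_cancel]
  have hpow : ∀ k : ℕ, ρ x ^ (t - 2 + k) = ρ x ^ (t - 2) * ρ x ^ k :=
    Real.rpow_add_natCast hρx (t - 2)
  have h0 : ρ x ^ t = ρ x ^ (t - 2) * ρ x ^ 2 := by rw [← hpow]; ring_nf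
  have h1 : ρ x ^ (t - 1) = ρ x ^ (t - 2) * ρ x ^ 1 := by rw [← hpow]; ring_nf
  have h3 : ρ x ^ (t + 1) = ρ x ^ (t - 2) * ρ x ^ 3 := by rw [← hpow]; ring_nf
  rw [lopEx_eq, lap_mul hU hψ (hρ.rpow_const_of_ne hρ0) hx, lap_rpow hU hρ hρ0 hx,
    gradDot_rpow_right _ (hd hρ) hρx, gradDot_mul_right _ (hd hψ) ((hd hρ).rpow_const (Or.inl hρx)),
    gradDot_rpow_right _ (hd hρ) hρx, gradDot_comm ψ ρ, hgrad, remainderOp, charPoly, h0, h1, h3]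
  ring

variable (hU : IsOpen U)
include hU

theorem smoothBar_remainderOp {ρ q ψ : En n → ℝ} (hρ : SmoothBar U ρ) (hq : SmoothBar U q)
    (hψ : SmoothBar U ψ) (a b t : ℝ) : SmoothBar U (remainderOp ρ q a b t ψ) := by
  have hconst_mul : ∀ (k : ℝ) {w : En n → ℝ}, SmoothBar U w → SmoothBar U (fun y => k * w y) :=
    fun k _ hw => smoothBar_mul hU (smoothBar_const k) hw
  refine smoothBar_add hU (smoothBar_add hU ?_ ?_) (smoothBar_mul hU ?_ hψ)
  · exact smoothBar_mul hU (hconst_mul a hρ) (smoothBar_lap hU hψ)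
  · exact hconst_mul _ (smoothBar_gradDot hU hρ hψ)
  · exact smoothBar_sub hU (hconst_mul _ (smoothBar_lap hU hρ)) (hconst_mul _ hq)

end Expansion

theorem Finset.sum_range_succ_add_eq_last {M : Type*} [AddCommGroup M] {A B : ℕ → M} (m : ℕ)
    (h0 : A 0 = 0) (hAB : ∀ l < m, A (l + 1) + B l = 0) :
    ∑ l ∈ Finset.range (m + 1), (A l + B l) = B m := by
  induction m with
  | zero => simp [h0]
  | succ m ih =>
    rw [Finset.sum_range_succ, ih fun l hl => hAB l (by omega), ← add_assoc, add_comm (B m),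
      hAB m (by omega), zero_add]

section Correction

variable {n : ℕ}

noncomputable def correction (ρ q : En n → ℝ) (a b c s : ℝ) (ψ₀ : En n → ℝ) : ℕ → En n → ℝ
  | 0 => ψ₀
  | l + 1 => fun x => -(charPoly a b c (s + (l + 1 : ℕ)))⁻¹ *
      remainderOp ρ q a b (s + l) (correction ρ q a b c s ψ₀ l) x

variable {ρ q ψ₀ : En n → ℝ} (a b c s : ℝ)

theorem smoothBar_correction {Ω : Set (En n)} (hΩ : IsOpen Ω) (hρ : SmoothBar Ω ρ)
    (hq : SmoothBar Ω q) (hψ₀ : SmoothBar Ω ψ₀) (l : ℕ) :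
    SmoothBar Ω (correction ρ q a b c s ψ₀ l) := by
  induction l with
  | zero => exact hψ₀
  | succ l ih =>
    exact smoothBar_mul hΩ (smoothBar_const _) (smoothBar_remainderOp hΩ hρ hq ih a b (s + l))

theorem charPoly_mul_correction_succ {l : ℕ} (h : charPoly a b c (s + (l + 1 : ℕ)) ≠ 0)
    (x : En n) :
    charPoly a b c (s + (l + 1 : ℕ)) * correction ρ q a b c s ψ₀ (l + 1) x
      = -remainderOp ρ q a b (s + l) (correction ρ q a b c s ψ₀ l) x := by
  simp only [correction]
  field_simp

end Correction

theorem singular_monomial_factor_improved_general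
    {n : ℕ} (Ω : Set (En n)) (hΩo : IsOpen Ω)
    (ρ : En n → ℝ) (ν : En n → Fin n → ℝ)
    (hdef : DefiningFn Ω ρ ν) (hρ : SmoothBar Ω ρ)
    (q : En n → ℝ) (hq : SmoothBar Ω q)
    (hq' : ∀ x ∈ Ω, 1 - (∑ i, (pd i ρ x) ^ 2) = ρ x * q x)
    (a b c s : ℝ)
    (hroot : a * s * (s - 1) + b * s + c = 0)
    (m : ℕ)
    (hnres : ∀ l : ℕ, 1 ≤ l → l ≤ m →
      a * (s + l) * (s + l - 1) + b * (s + l) + c ≠ 0)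
    (ψ₀ : En n → ℝ) (hψ₀ : SmoothBar Ω ψ₀) :
    ∃ ψ : ℕ → (En n → ℝ), ψ 0 = ψ₀ ∧ (∀ l, l ≤ m → SmoothBar Ω (ψ l)) ∧
      ∃ η : En n → ℝ, SmoothBar Ω η ∧
        ∀ x ∈ Ω,
          LopEx ρ a b c
            (fun y => (∑ l ∈ Finset.range (m + 1), ψ l y * ρ y ^ l) * ρ y ^ s) x
          = η x * ρ x ^ (s + m + 1) := by
  set ψ := correction ρ q a b c s ψ₀
  have hψ : ∀ l, SmoothBar Ω (ψ l) := smoothBar_correction a b c s hΩo hρ hq hψ₀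
  refine ⟨ψ, rfl, fun l _ => hψ l, remainderOp ρ q a b (s + m) (ψ m),
    smoothBar_remainderOp hΩo hρ hq (hψ m) a b (s + m), fun x hx => ?_⟩
  have hρ0 : ∀ y ∈ Ω, ρ y ≠ 0 := fun y hy => (hdef.1 y hy).ne'
  have hC2 : ∀ {w : En n → ℝ}, SmoothBar Ω w → ContDiffOn ℝ 2 w Ω :=
    fun hw => hw.1.of_le (WithTop.coe_le_coe.2 le_top)
  have hsplit : EqOn (fun y => (∑ l ∈ Finset.range (m + 1), ψ l y * ρ y ^ l) * ρ y ^ s)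
      (fun y => ∑ l ∈ Finset.range (m + 1), ψ l y * ρ y ^ (s + l)) Ω := fun y hy => by
    simp only [Finset.sum_mul, Real.rpow_add_natCast (hρ0 y hy)]
    exact Finset.sum_congr rfl fun l _ => by ring
  rw [lopEx_congr_of_eqOn hΩo ρ a b c hsplit hx, lopEx_sum hΩo ρ a b c _
      (fun l _ => (hC2 (hψ l)).mul ((hC2 hρ).rpow_const_of_ne hρ0)) hx,
    Finset.sum_congr rfl fun l _ =>
      lopEx_mul_rpow hΩo (hC2 hρ) hρ0 (hC2 (hψ l)) a b c (s + l) hx (hq' x hx)]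
  refine (Finset.sum_range_succ_add_eq_last m ?_ fun l hl => ?_).trans (mul_comm _ _)
  · simp [charPoly, hroot]
  · have hP := charPoly_mul_correction_succ (ρ := ρ) (q := q) (ψ₀ := ψ₀) a b c s
      (hnres (l + 1) l.succ_pos hl) x
    rw [← mul_assoc, hP, Nat.cast_succ, ← add_assoc]
    ring

/-- **Case 1 of Example 2.1, improved**: under the nonresonance condition at
`s+1, …, s+m`, the correction terms `ψ_1, …, ψ_m` can be chosen so that
`L((Σ ψ_l ρ^l)ρˢ) = ηρ^{s+m+1}`. -/
theorem singular_monomial_factor_improved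
    {n : ℕ} (Ω : Set (En n)) (hΩo : IsOpen Ω) (hΩb : Bornology.IsBounded Ω)
    (hΩconn : IsConnected Ω)
    (ρ : En n → ℝ) (ν : En n → Fin n → ℝ)
    (hdef : DefiningFn Ω ρ ν) (hρ : SmoothBar Ω ρ)
    (q : En n → ℝ) (hq : SmoothBar Ω q)
    (hq' : ∀ x ∈ Ω, 1 - (∑ i, (pd i ρ x) ^ 2) = ρ x * q x)
    (a b c s : ℝ) (ha : 0 < a) (hs : 0 < s)
    (hroot : a * s * (s - 1) + b * s + c = 0)
    (m : ℕ) (hm : 1 ≤ m)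
    (hnres : ∀ l : ℕ, 1 ≤ l → l ≤ m →
      a * (s + l) * (s + l - 1) + b * (s + l) + c ≠ 0)
    (ψ₀ : En n → ℝ) (hψ₀ : SmoothBar Ω ψ₀) :
    ∃ ψ : ℕ → (En n → ℝ), ψ 0 = ψ₀ ∧ (∀ l, l ≤ m → SmoothBar Ω (ψ l)) ∧
      ∃ η : En n → ℝ, SmoothBar Ω η ∧
        ∀ x ∈ Ω,
          LopEx ρ a b c
            (fun y => (∑ l ∈ Finset.range (m + 1), ψ l y * ρ y ^ l) * ρ y ^ s) x
          = η x * ρ x ^ (s + m + 1) :=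
  singular_monomial_factor_improved_general Ω hΩo ρ ν hdef hρ q hq hq' a b c s hroot m hnres ψ₀ hψ₀
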